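/- (Generalized cut-set bound at the action node.) Under the memoryless action-dependent source setup, let M = g(X^n) for any deterministic map g into a finite set. Then H(M) + H(X^n | Y^n, M) ≥ Σ_{i=1}^n [ I(X_i ; A_i) − I(Y_i ; A_i) + H(X_i | A_i, Y_i) ]. -/

import Mathlib

open Finset

/-- Probability that the random variable `X` takes the value `s`, under the pmf `p`. -/
noncomputable def probOf {Ω S : Type*} [Fintype Ω] [DecidableEq S]
    (p : Ω → ℝ) (X : Ω → S) (s : S) : ℝ :=
  ∑ ω : Ω, if X ω = s then p ω else 0

/-- Base-2 Shannon entropy of the random variable `X` under the pmf `p`. -/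
noncomputable def ent {Ω S : Type*} [Fintype Ω] [Fintype S] [DecidableEq S]
    (p : Ω → ℝ) (X : Ω → S) : ℝ :=
  ∑ s : S, Real.negMulLog (probOf p X s) / Real.log 2

/-- Conditional entropy `H(X | Y)` (base 2). -/
noncomputable def condEnt {Ω S T : Type*} [Fintype Ω] [Fintype S] [Fintype T]
    [DecidableEq S] [DecidableEq T] (p : Ω → ℝ) (X : Ω → S) (Y : Ω → T) : ℝ :=
  ent p (fun ω => (X ω, Y ω)) - ent p Y

/-- Mutual information `I(X ; Y)` (base 2). -/
noncomputable def mutInfo {Ω S T : Type*} [Fintype Ω] [Fintype S] [Fintype T]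
    [DecidableEq S] [DecidableEq T] (p : Ω → ℝ) (X : Ω → S) (Y : Ω → T) : ℝ :=
  ent p X + ent p Y - ent p (fun ω => (X ω, Y ω))

/-- Joint pmf of `(X^n, Y^n)` in the memoryless action-dependent source setup:
`X^n` i.i.d. `∼ μ`, `A^n = f X^n`, and conditionally on `X^n = x^n` the coordinates of `Y^n`
are independent with `Y_i ∼ W (x_i) (f x^n i)`. -/
noncomputable def jointPmf {n : ℕ} {𝒳 𝒜 𝒴 : Type*}
    (μ : 𝒳 → ℝ) (f : (Fin n → 𝒳) → (Fin n → 𝒜)) (W : 𝒳 → 𝒜 → 𝒴 → ℝ) :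
    (Fin n → 𝒳) × (Fin n → 𝒴) → ℝ :=
  fun ω => (∏ i, μ (ω.1 i)) * ∏ i, W (ω.1 i) (f ω.1 i) (ω.2 i)

/-!
Per coordinate the summand on the right equals `H(X_i) + H(Y_i | X_i, A_i) - H(Y_i)`, and since
the source is i.i.d. and the channel memoryless these terms add up to
`H(X^n, Y^n) - ∑ i, H(Y_i)`. As `M` is a function of `X^n`, the left side is
`H(M) + H(X^n, Y^n) - H(Y^n, M)`, and subadditivity `H(Y^n, M) ≤ H(M) + ∑ i, H(Y_i)` closes the gap.
-/

open Real

section probOf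

variable {Ω S T : Type*} [Fintype Ω] [DecidableEq S] (p : Ω → ℝ)

lemma probOf_nonneg (hp0 : ∀ ω, 0 ≤ p ω) (X : Ω → S) (s : S) : 0 ≤ probOf p X s :=
  sum_nonneg fun ω _ => by split_ifs <;> simp [hp0 ω]

lemma le_probOf_apply (hp0 : ∀ ω, 0 ≤ p ω) (X : Ω → S) (ω : Ω) : p ω ≤ probOf p X (X ω) := by
  unfold probOf
  simpa using single_le_sum (f := fun ω' => if X ω' = X ω then p ω' else 0)
    (fun ω' _ => by split_ifs <;> simp [hp0 ω']) (mem_univ ω)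

lemma probOf_apply_ne_zero (hp0 : ∀ ω, 0 ≤ p ω) (X : Ω → S) {ω : Ω} (hω : p ω ≠ 0) :
    probOf p X (X ω) ≠ 0 :=
  ((hp0 ω).lt_of_ne' hω |>.trans_le (le_probOf_apply p hp0 X ω)).ne'

lemma sum_probOf_mul [Fintype S] (X : Ω → S) (F : S → ℝ) :
    ∑ s, probOf p X s * F s = ∑ ω, p ω * F (X ω) := by
  simp only [probOf, sum_mul, ite_mul, zero_mul]
  rw [sum_comm]
  simp

lemma sum_probOf [Fintype S] (hp1 : ∑ ω, p ω = 1) (X : Ω → S) : ∑ s, probOf p X s = 1 := by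
  simpa [hp1] using sum_probOf_mul p X 1

lemma probOf_id [DecidableEq Ω] (ω : Ω) : probOf p id ω = p ω := by
  simp [probOf]

lemma probOf_comp_of_injective [DecidableEq T] (X : Ω → S) {h : S → T}
    (hh : Function.Injective h) (s : S) : probOf p (fun ω => h (X ω)) (h s) = probOf p X s := by
  simp [probOf, hh.eq_iff]

end probOf

section entropy

variable {Ω S T U : Type*} [Fintype Ω] [Fintype S] [DecidableEq S] [Fintype T] [DecidableEq T]
  (p : Ω → ℝ)

lemma ent_eq_neg_sum_mul_log (X : Ω → S) :
    ent p X = -(∑ ω, p ω * log (probOf p X (X ω))) / log 2 := by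
  rw [ent, ← sum_div, ← sum_probOf_mul p X (fun s => log (probOf p X s)), ← sum_neg_distrib]
  simp only [negMulLog, neg_mul]

lemma ent_comp_of_injective (X : Ω → S) {h : S → T} (hh : Function.Injective h) :
    ent p (fun ω => h (X ω)) = ent p X := by
  simp only [ent_eq_neg_sum_mul_log, probOf_comp_of_injective p X hh]

lemma ent_swap (X : Ω → S) (Y : Ω → T) :
    ent p (fun ω => (Y ω, X ω)) = ent p (fun ω => (X ω, Y ω)) :=
  ent_comp_of_injective p (fun ω => (X ω, Y ω)) (h := Prod.swap) Prod.swap_injective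

lemma ent_prod_assoc [Fintype U] [DecidableEq U] (X : Ω → S) (Y : Ω → T) (Z : Ω → U) :
    ent p (fun ω => (X ω, (Y ω, Z ω))) = ent p (fun ω => ((X ω, Y ω), Z ω)) :=
  ent_comp_of_injective p (fun ω => ((X ω, Y ω), Z ω)) (h := Equiv.prodAssoc S T U)
    (Equiv.injective _)

lemma negMulLog_le_sub_sub_mul_log {r q : ℝ} (hr : 0 ≤ r) (hq : 0 ≤ q) (hrq : r ≠ 0 → q ≠ 0) :
    negMulLog r ≤ q - r - r * log q := by
  rcases hr.eq_or_lt with rfl | hr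
  · simpa using hq
  have hq : 0 < q := hq.lt_of_ne' (hrq hr.ne')
  have hlog := mul_le_mul_of_nonneg_left (log_le_sub_one_of_pos (div_pos hq hr)) hr.le
  rw [log_div hq.ne' hr.ne', mul_sub r (q / r), mul_div_cancel₀ q hr.ne'] at hlog
  rw [negMulLog]
  linarith

/-- Gibbs' inequality. -/
lemma ent_le_neg_sum_mul_log (hp0 : ∀ ω, 0 ≤ p ω) (hp1 : ∑ ω, p ω = 1) (X : Ω → S)
    (q : S → ℝ) (hq0 : ∀ s, 0 ≤ q s) (hq1 : ∑ s, q s ≤ 1)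
    (hpq : ∀ ω, p ω ≠ 0 → q (X ω) ≠ 0) :
    ent p X ≤ -(∑ ω, p ω * log (q (X ω))) / log 2 := by
  have hsupp (s : S) : probOf p X s ≠ 0 → q s ≠ 0 := fun hs => by
    obtain ⟨ω, -, hω⟩ := exists_ne_zero_of_sum_ne_zero hs
    by_cases hXω : X ω = s
    · exact hXω ▸ hpq ω (by simpa [hXω] using hω)
    · simp [hXω] at hω
  rw [ent, ← sum_div, ← sum_probOf_mul p X (fun s => log (q s)), ← sum_neg_distrib]
  refine div_le_div_of_nonneg_right ?_ (log_pos one_lt_two).le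
  calc ∑ s, negMulLog (probOf p X s)
      ≤ ∑ s, (q s - probOf p X s - probOf p X s * log (q s)) :=
        sum_le_sum fun s _ => negMulLog_le_sub_sub_mul_log (probOf_nonneg p hp0 X s) (hq0 s)
          (hsupp s)
    _ ≤ ∑ s, -(probOf p X s * log (q s)) := by
        simp only [sum_sub_distrib, sum_probOf p hp1, sum_neg_distrib]
        linarith

lemma ent_pair_le (hp0 : ∀ ω, 0 ≤ p ω) (hp1 : ∑ ω, p ω = 1) (X : Ω → S) (Y : Ω → T) :
    ent p (fun ω => (X ω, Y ω)) ≤ ent p X + ent p Y := by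
  refine (ent_le_neg_sum_mul_log p hp0 hp1 _ (fun st => probOf p X st.1 * probOf p Y st.2)
    (fun _ => mul_nonneg (probOf_nonneg p hp0 X _) (probOf_nonneg p hp0 Y _))
    (by rw [Fintype.sum_prod_type, ← sum_mul_sum, sum_probOf p hp1, sum_probOf p hp1, one_mul])
    (fun ω hω => mul_ne_zero (probOf_apply_ne_zero p hp0 X hω)
      (probOf_apply_ne_zero p hp0 Y hω))).trans_eq ?_
  have hsplit (ω : Ω) : p ω * log (probOf p X (X ω) * probOf p Y (Y ω))
      = p ω * log (probOf p X (X ω)) + p ω * log (probOf p Y (Y ω)) := by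
    by_cases hω : p ω = 0
    · simp [hω]
    rw [log_mul (probOf_apply_ne_zero p hp0 X hω) (probOf_apply_ne_zero p hp0 Y hω), mul_add]
  simp only [hsplit, sum_add_distrib, ent_eq_neg_sum_mul_log]
  ring

lemma ent_pi_le {ι β : Type*} [Fintype ι] [DecidableEq ι] [Fintype β] [DecidableEq β]
    (hp0 : ∀ ω, 0 ≤ p ω) (hp1 : ∑ ω, p ω = 1) (Z : Ω → ι → β) :
    ent p Z ≤ ∑ i, ent p (fun ω => Z ω i) := by
  refine (ent_le_neg_sum_mul_log p hp0 hp1 _ (fun v => ∏ i, probOf p (fun ω => Z ω i) (v i))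
    (fun _ => prod_nonneg fun i _ => probOf_nonneg p hp0 _ _)
    (by simp [← Fintype.prod_sum, sum_probOf p hp1])
    (fun ω hω => prod_ne_zero_iff.2 fun i _ =>
      probOf_apply_ne_zero p hp0 (fun ω => Z ω i) hω)).trans_eq ?_
  have hsplit (ω : Ω) : p ω * log (∏ i, probOf p (fun ω => Z ω i) (Z ω i))
      = ∑ i, p ω * log (probOf p (fun ω => Z ω i) (Z ω i)) := by
    by_cases hω : p ω = 0
    · simp [hω]
    rw [log_prod fun i _ => probOf_apply_ne_zero p hp0 (fun ω => Z ω i) hω, mul_sum]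
  simp only [hsplit, ent_eq_neg_sum_mul_log, sum_div, ← sum_neg_distrib]
  exact sum_comm

lemma ent_pair_eq_add_sum_mul_ent (X : Ω → S) (Y : Ω → T) (κ : S → T → ℝ)
    (hκ : ∀ s, ∑ t, κ s t = 1)
    (hXY : ∀ s t, probOf p (fun ω => (X ω, Y ω)) (s, t) = probOf p X s * κ s t) :
    ent p (fun ω => (X ω, Y ω)) = ent p X + ∑ s, probOf p X s * ent (κ s) id := by
  have hnats : ∑ st, negMulLog (probOf p (fun ω => (X ω, Y ω)) st)
      = ∑ s, (negMulLog (probOf p X s) + probOf p X s * ∑ t, negMulLog (κ s t)) := by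
    rw [Fintype.sum_prod_type]
    refine sum_congr rfl fun s _ => ?_
    simp only [hXY, negMulLog_mul, sum_add_distrib, ← sum_mul, ← mul_sum, hκ, one_mul]
  simp only [ent, probOf_id, ← sum_div, mul_div_assoc', hnats, sum_add_distrib, add_div]

end entropy

def piPmf {ι β : Type*} [Fintype ι] (q : ι → β → ℝ) (v : ι → β) : ℝ :=
  ∏ i, q i (v i)

section piPmf

variable {ι β : Type*} [Fintype ι] [DecidableEq ι] [Fintype β] (q : ι → β → ℝ)

lemma sum_piPmf_mul_apply (hq : ∀ k, ∑ c, q k c = 1) (i : ι) (F : β → ℝ) :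
    ∑ v, piPmf q v * F (v i) = ∑ c, q i c * F c := by
  have hupdate (v : ι → β) :
      piPmf q v * F (v i) = ∏ k, Function.update q i (fun c => q i c * F c) k (v k) := by
    rw [piPmf, ← mul_prod_erase univ _ (mem_univ i), ← mul_prod_erase univ _ (mem_univ i),
      Function.update_self, mul_right_comm]
    congr 1
    exact prod_congr rfl fun k hk => by rw [Function.update_of_ne (ne_of_mem_erase hk)]
  simp_rw [hupdate, ← Fintype.prod_sum]
  rw [Fintype.prod_eq_single i fun k hk => by rw [Function.update_of_ne hk, hq],
    Function.update_self]

lemma sum_piPmf (hq : ∀ k, ∑ c, q k c = 1) : ∑ v, piPmf q v = 1 := by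
  simp [piPmf, ← Fintype.prod_sum, hq]

lemma probOf_piPmf_apply [DecidableEq β] (hq : ∀ k, ∑ c, q k c = 1) (i : ι) (c : β) :
    probOf (piPmf q) (fun v => v i) c = q i c := by
  have := sum_piPmf_mul_apply q hq i fun c' => if c' = c then 1 else 0
  simpa [probOf] using this

lemma ent_piPmf [DecidableEq β] (hq : ∀ k, ∑ c, q k c = 1) :
    ent (piPmf q) id = ∑ i, ent (q i) id := by
  have hsplit (v : ι → β) :
      piPmf q v * log (piPmf q v) = ∑ i, piPmf q v * log (q i (v i)) := by
    by_cases hv : piPmf q v = 0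
    · simp [hv]
    rw [piPmf, log_prod fun i _ => (prod_ne_zero_iff.1 hv) i (mem_univ i), mul_sum]
  simp only [ent_eq_neg_sum_mul_log, id, probOf_id, hsplit]
  rw [sum_comm]
  simp only [← sum_div, sum_neg_distrib]
  congr 2
  exact sum_congr rfl fun i _ => sum_piPmf_mul_apply q hq i fun c => log (q i c)

end piPmf

section kernel

variable {α β S T : Type*} [Fintype α] [Fintype β] [DecidableEq S] [DecidableEq T]
  (P : α → ℝ) (K : α → β → ℝ)

lemma probOf_comp_fst (hK : ∀ a, ∑ b, K a b = 1) (U : α → S) (s : S) :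
    probOf (fun ω : α × β => P ω.1 * K ω.1 ω.2) (fun ω => U ω.1) s = probOf P U s := by
  simp only [probOf, Fintype.sum_prod_type]
  refine sum_congr rfl fun a _ => ?_
  split_ifs
  · rw [← mul_sum, hK, mul_one]
  · exact sum_const_zero

lemma probOf_comp_fst_comp_snd (U : α → S) (V : β → T) (κ : S → T → ℝ)
    (hκ : ∀ a t, probOf (K a) V t = κ (U a) t) (s : S) (t : T) :
    probOf (fun ω : α × β => P ω.1 * K ω.1 ω.2) (fun ω => (U ω.1, V ω.2)) (s, t)
      = probOf P U s * κ s t := by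
  simp only [probOf, Fintype.sum_prod_type, sum_mul]
  refine sum_congr rfl fun a _ => ?_
  by_cases hUa : U a = s
  · subst hUa
    simp only [Prod.mk.injEq, true_and, if_true, ← hκ a t, probOf, mul_sum, mul_ite, mul_zero]
  · simp [hUa]

end kernel

section jointPmf

variable {n : ℕ} {𝒳 𝒜 𝒴 : Type*} {μ : 𝒳 → ℝ} (f : (Fin n → 𝒳) → (Fin n → 𝒜))
  {W : 𝒳 → 𝒜 → 𝒴 → ℝ}

def actionChannel (W : 𝒳 → 𝒜 → 𝒴 → ℝ) (xv : Fin n → 𝒳) : (Fin n → 𝒴) → ℝ :=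
  piPmf fun j => W (xv j) (f xv j)

lemma jointPmf_eq :
    jointPmf μ f W = fun ω => piPmf (fun _ => μ) ω.1 * actionChannel f W ω.1 ω.2 :=
  rfl

lemma jointPmf_nonneg (hμ0 : ∀ x, 0 ≤ μ x) (hW0 : ∀ x a y, 0 ≤ W x a y) (ω) :
    0 ≤ jointPmf μ f W ω :=
  mul_nonneg (prod_nonneg fun _ _ => hμ0 _) (prod_nonneg fun _ _ => hW0 _ _ _)

variable [Fintype 𝒴]

lemma sum_actionChannel (hW1 : ∀ x a, ∑ y, W x a y = 1) (xv : Fin n → 𝒳) :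
    ∑ yv, actionChannel f W xv yv = 1 :=
  sum_piPmf _ fun _ => hW1 _ _

lemma probOf_actionChannel_apply [DecidableEq 𝒴] (hW1 : ∀ x a, ∑ y, W x a y = 1)
    (xv : Fin n → 𝒳) (i : Fin n) (y : 𝒴) :
    probOf (actionChannel f W xv) (fun v => v i) y = W (xv i) (f xv i) y :=
  probOf_piPmf_apply _ (fun _ => hW1 _ _) i y

variable [Fintype 𝒳]

lemma sum_jointPmf (hμ1 : ∑ x, μ x = 1) (hW1 : ∀ x a, ∑ y, W x a y = 1) :
    ∑ ω, jointPmf μ f W ω = 1 := by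
  simp only [jointPmf_eq, Fintype.sum_prod_type, ← mul_sum, sum_actionChannel f hW1, mul_one]
  exact sum_piPmf _ fun _ => hμ1

variable [DecidableEq 𝒳]

lemma probOf_jointPmf_fst_apply (hμ1 : ∑ x, μ x = 1) (hW1 : ∀ x a, ∑ y, W x a y = 1)
    (i : Fin n) (x : 𝒳) : probOf (jointPmf μ f W) (fun ω => ω.1 i) x = μ x := by
  rw [jointPmf_eq, probOf_comp_fst _ _ (sum_actionChannel f hW1) fun v => v i,
    probOf_piPmf_apply _ (fun _ => hμ1)]

lemma ent_jointPmf_fst_apply (hμ1 : ∑ x, μ x = 1) (hW1 : ∀ x a, ∑ y, W x a y = 1) (i : Fin n) :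
    ent (jointPmf μ f W) (fun ω => ω.1 i) = ent μ id := by
  simp only [ent, probOf_jointPmf_fst_apply f hμ1 hW1, probOf_id]

variable [Fintype 𝒜] [DecidableEq 𝒜] [DecidableEq 𝒴]

lemma ent_jointPmf_triple_apply (hW1 : ∀ x a, ∑ y, W x a y = 1) (i : Fin n) :
    ent (jointPmf μ f W) (fun ω => ((ω.1 i, f ω.1 i), ω.2 i))
      = ent (jointPmf μ f W) (fun ω => (ω.1 i, f ω.1 i))
        + ∑ s, probOf (jointPmf μ f W) (fun ω => (ω.1 i, f ω.1 i)) s * ent (W s.1 s.2) id := by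
  refine ent_pair_eq_add_sum_mul_ent (jointPmf μ f W) (fun ω => (ω.1 i, f ω.1 i))
    (fun ω => ω.2 i) (fun s => W s.1 s.2) (fun s => hW1 s.1 s.2) fun s y => ?_
  rw [jointPmf_eq, probOf_comp_fst _ _ (sum_actionChannel f hW1) fun xv => (xv i, f xv i)]
  exact probOf_comp_fst_comp_snd _ _ (fun xv => (xv i, f xv i)) (fun yv : Fin n → 𝒴 => yv i)
    (fun s y => W s.1 s.2 y) (fun xv => probOf_actionChannel_apply f hW1 xv i) s y

lemma ent_jointPmf (hμ1 : ∑ x, μ x = 1) (hW1 : ∀ x a, ∑ y, W x a y = 1) :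
    ent (jointPmf μ f W) (fun ω => (ω.1, ω.2))
      = ∑ i, (ent μ id + ∑ s, probOf (jointPmf μ f W) (fun ω => (ω.1 i, f ω.1 i)) s
          * ent (W s.1 s.2) id) := by
  have hU (i : Fin n) (s : 𝒳 × 𝒜) : probOf (jointPmf μ f W) (fun ω => (ω.1 i, f ω.1 i)) s
      = probOf (piPmf fun _ => μ) (fun xv => (xv i, f xv i)) s :=
    probOf_comp_fst (piPmf fun _ => μ) (actionChannel f W) (sum_actionChannel f hW1)
      (fun xv => (xv i, f xv i)) s
  have hfst (xv : Fin n → 𝒳) :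
      probOf (jointPmf μ f W) (fun ω => ω.1) xv = piPmf (fun _ => μ) xv :=
    (probOf_comp_fst (piPmf fun _ => μ) (actionChannel f W) (sum_actionChannel f hW1) id
      xv).trans (probOf_id _ xv)
  have hchain := ent_pair_eq_add_sum_mul_ent (jointPmf μ f W) (fun ω => ω.1) (fun ω => ω.2)
    (actionChannel f W) (sum_actionChannel f hW1) fun xv yv => by
      rw [hfst]
      exact (probOf_comp_fst_comp_snd (piPmf fun _ => μ) (actionChannel f W) id id _
          (fun xv yv => probOf_id _ yv) xv yv).trans
        (by rw [probOf_id])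
  have hX : ent (jointPmf μ f W) (fun ω => ω.1) = ∑ _i : Fin n, ent μ id := by
    rw [← ent_piPmf _ fun _ => hμ1]
    simp only [ent, hfst, probOf_id]
  have hYgivenX (xv : Fin n → 𝒳) :
      ent (actionChannel f W xv) id = ∑ i, ent (W (xv i) (f xv i)) id :=
    ent_piPmf _ fun _ => hW1 _ _
  simp only [hchain, hX, hfst, hYgivenX, hU, sum_add_distrib, mul_sum]
  rw [sum_comm]
  congr 1
  refine sum_congr rfl fun i _ => ?_
  exact (sum_probOf_mul (piPmf fun _ => μ) (fun xv => (xv i, f xv i))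
    fun s => ent (W s.1 s.2) id).symm

lemma mutInfo_sub_mutInfo_add_condEnt_jointPmf (hμ1 : ∑ x, μ x = 1)
    (hW1 : ∀ x a, ∑ y, W x a y = 1) (i : Fin n) :
    mutInfo (jointPmf μ f W) (fun ω => ω.1 i) (fun ω => f ω.1 i)
        - mutInfo (jointPmf μ f W) (fun ω => ω.2 i) (fun ω => f ω.1 i)
        + condEnt (jointPmf μ f W) (fun ω => ω.1 i) (fun ω => (f ω.1 i, ω.2 i))
      = ent μ id
        + ∑ s, probOf (jointPmf μ f W) (fun ω => (ω.1 i, f ω.1 i)) s * ent (W s.1 s.2) id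
        - ent (jointPmf μ f W) (fun ω => ω.2 i) := by
  simp only [mutInfo, condEnt, ent_swap (jointPmf μ f W) (fun ω => f ω.1 i) (fun ω => ω.2 i),
    ent_prod_assoc (jointPmf μ f W) (fun ω => ω.1 i) (fun ω => f ω.1 i) (fun ω => ω.2 i),
    ent_jointPmf_triple_apply f hW1, ent_jointPmf_fst_apply f hμ1 hW1]
  ring

end jointPmf

/-- Generalized cut-set bound at the action node: under the memoryless action-dependent
source setup, for `M = g (X^n)` with `g` a deterministic map into a finite set,
`H(M) + H(X^n | Y^n, M) ≥ ∑ i, [ I(X_i;A_i) − I(Y_i;A_i) + H(X_i | A_i, Y_i) ]`. -/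
theorem stmt_3 {n : ℕ} {𝒳 𝒜 𝒴 ℳ : Type*}
    [Fintype 𝒳] [DecidableEq 𝒳] [Fintype 𝒜] [DecidableEq 𝒜] [Fintype 𝒴] [DecidableEq 𝒴]
    [Fintype ℳ] [DecidableEq ℳ]
    (μ : 𝒳 → ℝ) (hμ0 : ∀ x, 0 ≤ μ x) (hμ1 : ∑ x, μ x = 1)
    (f : (Fin n → 𝒳) → (Fin n → 𝒜))
    (W : 𝒳 → 𝒜 → 𝒴 → ℝ) (hW0 : ∀ x a y, 0 ≤ W x a y) (hW1 : ∀ x a, ∑ y, W x a y = 1)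
    (g : (Fin n → 𝒳) → ℳ) :
    ent (jointPmf μ f W) (fun ω => g ω.1)
        + condEnt (jointPmf μ f W) (fun ω => ω.1) (fun ω => (ω.2, g ω.1))
      ≥ ∑ i : Fin n,
          (mutInfo (jointPmf μ f W) (fun ω => ω.1 i) (fun ω => f ω.1 i)
            - mutInfo (jointPmf μ f W) (fun ω => ω.2 i) (fun ω => f ω.1 i)
            + condEnt (jointPmf μ f W) (fun ω => ω.1 i) (fun ω => (f ω.1 i, ω.2 i))) := by
  have hp0 := jointPmf_nonneg f hμ0 hW0
  have hp1 := sum_jointPmf f hμ1 hW1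
  have hXYM : ent (jointPmf μ f W) (fun ω => (ω.1, (ω.2, g ω.1)))
      = ent (jointPmf μ f W) (fun ω => (ω.1, ω.2)) :=
    ent_comp_of_injective (jointPmf μ f W) (fun ω => (ω.1, ω.2))
      (h := fun r => (r.1, (r.2, g r.1))) fun _ _ h => congrArg (fun r => (r.1, r.2.1)) h
  have hYM := ent_pair_le (jointPmf μ f W) hp0 hp1 (fun ω => ω.2) (fun ω => g ω.1)
  have hY := ent_pi_le (jointPmf μ f W) hp0 hp1 (fun ω => ω.2)
  rw [ge_iff_le, sum_congr rfl fun i _ => mutInfo_sub_mutInfo_add_condEnt_jointPmf f hμ1 hW1 i,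
    condEnt, hXYM, ent_jointPmf f hμ1 hW1]
  simp only [sum_sub_distrib]
  linarith
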